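/- arXiv:2309.08175 — 2 statements merged into one kernel-verified Lean document; each statement's English description precedes it below -/
import Mathlib

section
/- Any solution g of the ODE -k·x·g'(x) + (k/2)·(1-x²)·g''(x) = 0 on (-1,1) has the form g(x) = a + c·log((1+x)/(1-x)) for constants a, c; moreover if c ≠ 0 then g takes negative values somewhere on (-1,1), so the only nonnegative probability-density solutions are constant, equal to 1/2. -/
open Real Set

lemma const_on_open_convex {s : Set ℝ} (hso : IsOpen s) (hsc : Convex ℝ s)
    (f : ℝ → ℝ) (hf : ∀ x ∈ s, HasDerivAt f 0 x) :
    ∀ x ∈ s, ∀ y ∈ s, f x = f y := by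
  intro x hx y hy
  apply hsc.is_const_of_fderivWithin_eq_zero
    (fun z hz => ((hf z hz).differentiableAt).differentiableWithinAt) ?_ hx hy
  intro z hz
  rw [fderivWithin_of_isOpen hso hz]
  have := (hf z hz).hasFDerivAt
  rw [this.fderiv]
  ext w
  simp

/-- Any solution of `-k x g' + (k/2)(1-x²) g'' = 0` on `(-1,1)` has the form
`g(x) = a + c log((1+x)/(1-x))`; if `c ≠ 0` then `g` takes negative values, so the only
nonnegative probability-density solutions are the constant `1/2`. -/
theorem stationary_ode_solutions (k : ℝ) (hk : 0 < k) (g : ℝ → ℝ)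
    (hg : ContDiffOn ℝ 2 g (Ioo (-1 : ℝ) 1))
    (hode : ∀ x ∈ Ioo (-1 : ℝ) 1,
      -k * x * deriv g x + k / 2 * (1 - x ^ 2) * deriv (deriv g) x = 0) :
    (∃ a c : ℝ,
      (∀ x ∈ Ioo (-1 : ℝ) 1, g x = a + c * Real.log ((1 + x) / (1 - x))) ∧
      (c ≠ 0 → ∃ x ∈ Ioo (-1 : ℝ) 1, g x < 0)) ∧
    ((∀ x ∈ Ioo (-1 : ℝ) 1, 0 ≤ g x) → (∫ x in (-1 : ℝ)..1, g x) = 1 →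
      ∀ x ∈ Ioo (-1 : ℝ) 1, g x = 1 / 2) := by
  set s : Set ℝ := Ioo (-1 : ℝ) 1 with hs
  have hso : IsOpen s := isOpen_Ioo
  have hsc : Convex ℝ s := convex_Ioo _ _
  have h0s : (0 : ℝ) ∈ s := by constructor <;> norm_num
  have hpos : ∀ x ∈ s, 0 < 1 - x ^ 2 := by
    rintro x ⟨h1, h2⟩; nlinarith
  set h : ℝ → ℝ := deriv g with hh
  have hgdiff : DifferentiableOn ℝ g s := hg.differentiableOn (by norm_num)
  have hh1 : ContDiffOn ℝ 1 h s := hg.deriv_of_isOpen hso (by norm_num)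
  have hhdiff : DifferentiableOn ℝ h s := hh1.differentiableOn one_ne_zero
  have hhAt : ∀ x ∈ s, DifferentiableAt ℝ h x :=
    fun x hx => hhdiff.differentiableAt (hso.mem_nhds hx)
  have hgAt : ∀ x ∈ s, DifferentiableAt ℝ g x :=
    fun x hx => hgdiff.differentiableAt (hso.mem_nhds hx)
  -- key: (1-x²) h' = 2 x h on s
  have key : ∀ x ∈ s, (1 - x ^ 2) * deriv h x = 2 * x * h x := by
    intro x hx
    have := hode x hx
    have hk' : k ≠ 0 := ne_of_gt hk
    field_simp at this
    nlinarith [this]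
  -- φ = (1-x²) h is constant on s
  have hφ : ∀ x ∈ s, HasDerivAt (fun x => (1 - x ^ 2) * h x) 0 x := by
    intro x hx
    have h1 : HasDerivAt (fun x : ℝ => 1 - x ^ 2) (-(2 * x)) x := by
      have := ((hasDerivAt_pow 2 x).const_sub 1)
      simpa using this
    have h2 : HasDerivAt h (deriv h x) x := (hhAt x hx).hasDerivAt
    have := h1.mul h2
    refine this.congr_deriv ?_
    have := key x hx
    ring_nf
    ring_nf at this
    linarith
  set C : ℝ := h 0 with hC
  have hφconst : ∀ x ∈ s, (1 - x ^ 2) * h x = C := by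
    intro x hx
    have := const_on_open_convex hso hsc _ hφ x hx 0 h0s
    simpa using this
  -- L and its derivative
  set L : ℝ → ℝ := fun x => Real.log ((1 + x) / (1 - x)) with hL
  have hLderiv : ∀ x ∈ s, HasDerivAt L (2 / (1 - x ^ 2)) x := by
    rintro x ⟨hx1, hx2⟩
    have hp : 0 < 1 + x := by linarith
    have hm : 0 < 1 - x := by linarith
    have d1 : HasDerivAt (fun y : ℝ => Real.log (1 + y)) (1 / (1 + x)) x := by
      have : HasDerivAt (fun y : ℝ => 1 + y) 1 x := by
        simpa using (hasDerivAt_id x).const_add 1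
      simpa [one_div, Function.comp_def] using (Real.hasDerivAt_log (ne_of_gt hp)).comp x this
    have d2 : HasDerivAt (fun y : ℝ => Real.log (1 - y)) (-(1 / (1 - x))) x := by
      have : HasDerivAt (fun y : ℝ => 1 - y) (-1) x := by
        simpa using ((hasDerivAt_id x).const_sub 1)
      have := (Real.hasDerivAt_log (ne_of_gt hm)).comp x this
      simpa [one_div, Function.comp_def] using this
    have d3 : HasDerivAt (fun y : ℝ => Real.log (1 + y) - Real.log (1 - y))
        (1 / (1 + x) + 1 / (1 - x)) x := by
      simpa [sub_neg_eq_add, Pi.sub_def] using d1.sub d2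
    have heq : (fun y : ℝ => Real.log (1 + y) - Real.log (1 - y)) =ᶠ[nhds x] L := by
      filter_upwards [hso.mem_nhds (⟨hx1, hx2⟩ : x ∈ s)] with y hy
      rcases hy with ⟨hy1, hy2⟩
      have hlog : Real.log ((1 + y) / (1 - y)) = Real.log (1 + y) - Real.log (1 - y) :=
        Real.log_div (by linarith : (0:ℝ) < 1 + y).ne' (by linarith : (0:ℝ) < 1 - y).ne'
      simp [hL, hlog]
    have := d3.congr_of_eventuallyEq heq.symm
    refine this.congr_deriv ?_
    have h0 : 1 - x ^ 2 ≠ 0 := by nlinarith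
    field_simp
    ring
  -- ψ = g - (C/2) L is constant on s
  have hψ : ∀ x ∈ s, HasDerivAt (fun x => g x - C / 2 * L x) 0 x := by
    intro x hx
    have h1 : HasDerivAt g (h x) x := (hgAt x hx).hasDerivAt
    have h2 := (hLderiv x hx).const_mul (C / 2)
    have := h1.sub h2
    refine this.congr_deriv ?_
    have hne := (hpos x hx).ne'
    have := hφconst x hx
    field_simp
    linarith
  have hgform : ∀ x ∈ s, g x = g 0 + C / 2 * L x := by
    intro x hx
    have := const_on_open_convex hso hsc _ hψ x hx 0 h0s
    have hL0 : L 0 = 0 := by simp [hL]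
    rw [hL0] at this
    simp at this
    linarith
  -- negativity claim
  have hneg : ∀ a c : ℝ, c ≠ 0 → ∃ x ∈ s, a + c * L x < 0 := by
    intro a c hc
    set t : ℝ := -(|a| + 1) / c with ht
    set x : ℝ := (Real.exp t - 1) / (Real.exp t + 1) with hx
    have hexp : 0 < Real.exp t := Real.exp_pos t
    have hden : 0 < Real.exp t + 1 := by linarith
    have hxmem : x ∈ s := by
      constructor
      · rw [hx, lt_div_iff₀ hden]; linarith
      · rw [hx, div_lt_one hden]; linarith
    refine ⟨x, hxmem, ?_⟩
    have hLx : L x = t := by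
      have h1x : 1 + x = 2 * Real.exp t / (Real.exp t + 1) := by
        rw [hx]; field_simp; ring
      have h2x : 1 - x = 2 / (Real.exp t + 1) := by
        rw [hx]; field_simp; ring
      have : (1 + x) / (1 - x) = Real.exp t := by
        rw [h1x, h2x]; field_simp
      rw [hL]; simp only [this, Real.log_exp]
    rw [hLx, ht]
    have : c * (-(|a| + 1) / c) = -(|a| + 1) := by field_simp
    rw [this]
    have := abs_nonneg a
    have := le_abs_self a
    linarith
  refine ⟨⟨g 0, C / 2, hgform, fun hc => ?_⟩, ?_⟩
  · obtain ⟨x, hx, hlt⟩ := hneg (g 0) (C / 2) hc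
    exact ⟨x, hx, by rw [hgform x hx]; exact hlt⟩
  · intro hnn hint x hx
    -- first, C = 0
    have hC0 : C / 2 = 0 := by
      by_contra hc
      obtain ⟨y, hy, hlt⟩ := hneg (g 0) (C / 2) hc
      have := hnn y hy
      rw [hgform y hy] at this
      linarith
    have hgconst : ∀ y ∈ s, g y = g 0 := by
      intro y hy
      rw [hgform y hy, hC0]; ring
    have hintval : (∫ y in (-1 : ℝ)..1, g y) = 2 * g 0 := by
      rw [intervalIntegral.integral_of_le (by norm_num : (-1:ℝ) ≤ 1),
        MeasureTheory.integral_Ioc_eq_integral_Ioo]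
      rw [MeasureTheory.setIntegral_congr_fun measurableSet_Ioo
        (fun y hy => hgconst y hy)]
      rw [MeasureTheory.setIntegral_const, MeasureTheory.measureReal_def, Real.volume_Ioo,
        ENNReal.toReal_ofReal (by norm_num : (0:ℝ) ≤ 1 - -1), smul_eq_mul]
      norm_num
    rw [hintval] at hint
    rw [hgconst x hx]
    linarith
end

section
/- For any polynomial h̃ of degree at most N and k > 0, the function F(t,x) = Σ_{n=0}^{N} c_n exp(-(1/2) k n(n+1)(T-t)) P_n(x), with c_n = ((2n+1)/2)∫_{-1}^{1} h̃(y) P_n(y) dy, satisfies the PDE ∂F/∂t = k x ∂F/∂x - (k/2)(1-x²) ∂²F/∂x² on [0,T] × (-1,1) together with F(T,x) = h̃(x). -/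
open Real Finset Set

/-- The `n`-th Legendre polynomial, via the Rodrigues formula. -/
noncomputable def legendre (n : ℕ) : ℝ → ℝ :=
  fun x => ((2 : ℝ) ^ n * n.factorial)⁻¹ * iteratedDeriv n (fun y => (y ^ 2 - 1) ^ n) x

open Polynomial intervalIntegral

noncomputable def legU (n : ℕ) : Polynomial ℝ := (X ^ 2 - 1) ^ n
noncomputable def legQ (n : ℕ) : Polynomial ℝ := derivative^[n] (legU n)
noncomputable def legP (n : ℕ) : Polynomial ℝ := C ((2 : ℝ) ^ n * n.factorial)⁻¹ * legQ n

lemma itd_add (m : ℕ) (p q : Polynomial ℝ) :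
    derivative^[m] (p + q) = derivative^[m] p + derivative^[m] q := by
  induction m generalizing p q with
  | zero => simp
  | succ m ih => simp [Function.iterate_succ_apply, derivative_add, ih]

lemma itderiv_X_mul (m : ℕ) (p : Polynomial ℝ) :
    derivative^[m + 1] (X * p)
      = X * derivative^[m + 1] p + ((m : Polynomial ℝ) + 1) * derivative^[m] p := by
  induction m generalizing p with
  | zero => simp [derivative_mul]; ring
  | succ m ih =>
    have h1 : derivative (X * p) = X * derivative p + p := by
      simp [derivative_mul]; ring
    rw [Function.iterate_succ_apply, h1, itd_add, ih (derivative p),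
      ← Function.iterate_succ_apply (⇑derivative) (m + 1) p,
      ← Function.iterate_succ_apply (⇑derivative) m p]
    push_cast
    ring

lemma itderiv_X2_mul (m : ℕ) (p : Polynomial ℝ) :
    derivative^[m + 2] ((X ^ 2 - 1) * p)
      = (X ^ 2 - 1) * derivative^[m + 2] p
        + 2 * ((m : Polynomial ℝ) + 2) * X * derivative^[m + 1] p
        + ((m : Polynomial ℝ) + 2) * ((m : Polynomial ℝ) + 1) * derivative^[m] p := by
  induction m generalizing p with
  | zero =>
    simp only [Function.iterate_succ_apply, Function.iterate_zero_apply,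
      Function.iterate_one]
    simp [derivative_mul, derivative_pow, map_ofNat]
    ring
  | succ m ih =>
    have h1 : derivative ((X ^ 2 - 1) * p)
        = (X ^ 2 - 1) * derivative p + 2 * (X * p) := by
      simp [derivative_mul, derivative_pow, map_ofNat]; ring
    rw [Function.iterate_succ_apply, h1, itd_add, ih (derivative p),
      show (2 : Polynomial ℝ) * (X * p) = C 2 * (X * p) by rw [map_ofNat],
      iterate_derivative_C_mul, itderiv_X_mul (m + 1) p,
      ← Function.iterate_succ_apply (⇑derivative) (m + 2) p,
      ← Function.iterate_succ_apply (⇑derivative) (m + 1) p,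
      ← Function.iterate_succ_apply (⇑derivative) m p, map_ofNat]
    push_cast
    ring

lemma legODE (n : ℕ) :
    (X ^ 2 - 1) * derivative (derivative (legQ n)) + 2 * X * derivative (legQ n)
      = ((n : Polynomial ℝ) * ((n : Polynomial ℝ) + 1)) * legQ n := by
  cases n with
  | zero => simp [legQ, legU]
  | succ n =>
    have dX2 : derivative (X ^ 2 - 1 : Polynomial ℝ) = 2 * X := by
      simp [derivative_X_pow, map_ofNat]; norm_num
    have key : (X ^ 2 - 1) * derivative (legU (n + 1))
        = C (2 * (n + 1) : ℝ) * (X * legU (n + 1)) := by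
      rw [legU, derivative_pow, dX2]
      simp only [map_mul, map_add, map_one, map_ofNat, map_natCast]
      push_cast
      ring
    have h2 := congrArg (fun p => derivative^[n + 2] p) key
    rw [itderiv_X2_mul n (derivative (legU (n + 1))), iterate_derivative_C_mul,
      itderiv_X_mul (n + 1) (legU (n + 1))] at h2
    have e1 : derivative^[n + 1] (legU (n + 1)) = legQ (n + 1) := rfl
    have itd_swap : ∀ (m : ℕ) (p : Polynomial ℝ),
        derivative^[m] (derivative p) = derivative (derivative^[m] p) := by
      intro m p
      rw [← Function.iterate_succ_apply, Function.iterate_succ_apply']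
    have e5 : derivative^[n + 2] (legU (n + 1)) = derivative (legQ (n + 1)) :=
      Function.iterate_succ_apply' (⇑derivative) (n + 1) (legU (n + 1))
    have e2 : derivative^[n + 2] (derivative (legU (n + 1)))
        = derivative (derivative (legQ (n + 1))) := by rw [itd_swap, e5]
    have e3 : derivative^[n + 1] (derivative (legU (n + 1)))
        = derivative (legQ (n + 1)) := by rw [itd_swap, e1]
    have e4 : derivative^[n] (derivative (legU (n + 1))) = legQ (n + 1) :=
      (Function.iterate_succ_apply (⇑derivative) n (legU (n + 1))).symm
    rw [e2, e3, e4, e5, e1] at h2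
    simp only [map_mul, map_add, map_one, map_ofNat, map_natCast] at h2 ⊢
    push_cast at h2 ⊢
    linear_combination h2

lemma itDeriv_poly (k : ℕ) (p : Polynomial ℝ) :
    iteratedDeriv k (fun y => p.eval y) = fun x => (derivative^[k] p).eval x := by
  induction k generalizing p with
  | zero => simp
  | succ k ih =>
    rw [iteratedDeriv_succ']
    have : deriv (fun y => p.eval y) = fun y => p.derivative.eval y :=
      funext fun y => Polynomial.deriv (p := p)
    rw [this, ih, Function.iterate_succ_apply]

lemma pint (p : Polynomial ℝ) (a b : ℝ) :
    IntervalIntegrable (fun x => p.eval x) MeasureTheory.volume a b :=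
  p.continuous.intervalIntegrable a b

lemma ibp_step (p q : Polynomial ℝ) (h1 : q.eval 1 = 0) (h2 : q.eval (-1) = 0) :
    ∫ x in (-1 : ℝ)..1, p.eval x * (derivative q).eval x
      = - ∫ x in (-1 : ℝ)..1, (derivative p).eval x * q.eval x := by
  have := integral_mul_deriv_eq_deriv_mul (a := (-1 : ℝ)) (b := 1)
    (u := fun x => p.eval x) (v := fun x => q.eval x)
    (u' := fun x => (derivative p).eval x) (v' := fun x => (derivative q).eval x)
    (fun x _ => p.hasDerivAt x) (fun x _ => q.hasDerivAt x)
    (pint _ _ _) (pint _ _ _)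
  rw [this, h1, h2]
  ring

lemma legU_eval_one (n k : ℕ) (hk : k < n) :
    (derivative^[k] (legU n)).eval 1 = 0 ∧ (derivative^[k] (legU n)).eval (-1) = 0 := by
  obtain ⟨q, hq⟩ := pow_sub_dvd_iterate_derivative_pow (X ^ 2 - 1 : Polynomial ℝ) n k
  rw [legU, hq]
  have hnk : n - k ≠ 0 := by omega
  constructor <;> simp [eval_pow, zero_pow hnk]

lemma ibp_iter (n : ℕ) : ∀ k, k ≤ n → ∀ p : Polynomial ℝ,
    (∫ x in (-1 : ℝ)..1, p.eval x * (derivative^[k] (legU n)).eval x)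
      = (-1 : ℝ) ^ k * ∫ x in (-1 : ℝ)..1, (derivative^[k] p).eval x * (legU n).eval x := by
  intro k
  induction k with
  | zero => intro _ p; simp
  | succ k ih =>
    intro hk p
    have hb := legU_eval_one n k (by omega)
    rw [Function.iterate_succ_apply', ibp_step p _ hb.1 hb.2, ih (by omega) (derivative p),
      ← Function.iterate_succ_apply]
    ring

lemma pint' (f : ℝ → ℝ) (hf : Continuous f) (a b : ℝ) :
    IntervalIntegrable f MeasureTheory.volume a b := hf.intervalIntegrable a b

lemma contU (m : ℕ) : Continuous (fun x : ℝ => (1 - x ^ 2) ^ m) :=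
  (continuous_const.sub (continuous_pow 2)).pow m

lemma In_succ (n : ℕ) :
    (2 * (n : ℝ) + 3) * (∫ x in (-1 : ℝ)..1, (1 - x ^ 2) ^ (n + 1))
      = (2 * ((n : ℝ) + 1)) * ∫ x in (-1 : ℝ)..1, (1 - x ^ 2) ^ n := by
  have h := ibp_step X ((1 - X ^ 2) ^ (n + 1)) (by simp) (by simp)
  have e1 : (fun x : ℝ => (X : Polynomial ℝ).eval x
      * (derivative ((1 - X ^ 2) ^ (n + 1))).eval x)
      = fun x : ℝ => (-(2 * ((n : ℝ) + 1)))
          * ((1 - x ^ 2) ^ n - (1 - x ^ 2) ^ (n + 1)) := by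
    funext x
    rw [derivative_pow]
    simp [derivative_X_pow]
    push_cast
    ring
  have e2 : (fun x : ℝ => (derivative (X : Polynomial ℝ)).eval x
      * (((1 - X ^ 2 : Polynomial ℝ)) ^ (n + 1)).eval x)
      = fun x : ℝ => (1 - x ^ 2) ^ (n + 1) := by
    funext x; simp
  rw [e1, e2, intervalIntegral.integral_const_mul,
    intervalIntegral.integral_sub (pint' _ (contU n) _ _) (pint' _ (contU (n + 1)) _ _)] at h
  linarith

lemma In_val (n : ℕ) :
    (∫ x in (-1 : ℝ)..1, (1 - x ^ 2) ^ n)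
      = 2 ^ (2 * n + 1) * (n.factorial : ℝ) ^ 2 / (2 * n + 1).factorial := by
  induction n with
  | zero => simp; norm_num
  | succ n ih =>
    have h := In_succ n
    rw [ih] at h
    have hfac : ((2 * (n + 1) + 1).factorial : ℝ)
        = (2 * (n : ℝ) + 3) * ((2 * (n : ℝ) + 2) * ((2 * n + 1).factorial : ℝ)) := by
      rw [show 2 * (n + 1) + 1 = (2 * n + 2) + 1 by ring, Nat.factorial_succ,
        show 2 * n + 2 = (2 * n + 1) + 1 by ring, Nat.factorial_succ]
      push_cast
      ring
    have h1 : (2 * (n : ℝ) + 3) ≠ 0 := by positivity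
    have h2 : ((2 * n + 1).factorial : ℝ) ≠ 0 := by positivity
    have h3 : (((n + 1).factorial : ℝ)) = ((n : ℝ) + 1) * n.factorial := by
      rw [Nat.factorial_succ]; push_cast; ring
    rw [hfac, h3]
    have : (∫ x in (-1 : ℝ)..1, (1 - x ^ 2) ^ (n + 1))
        = (2 * ((n : ℝ) + 1)) * (2 ^ (2 * n + 1) * (n.factorial : ℝ) ^ 2 / (2 * n + 1).factorial)
          / (2 * (n : ℝ) + 3) := by
      field_simp at h ⊢
      linarith
    rw [this]
    have e : 2 * (n + 1) + 1 = 2 * n + 1 + 2 := by ring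
    rw [e, pow_add]
    field_simp
    ring

lemma legU_monic (n : ℕ) : (legU n).Monic := by
  apply Polynomial.Monic.pow
  apply monic_X_pow_sub
  simpa using WithBot.coe_lt_coe.mpr (by norm_num : (0 : ℕ) < 2)

lemma legU_natDegree (n : ℕ) : (legU n).natDegree = 2 * n := by
  have h2 : ((X : Polynomial ℝ) ^ 2 - 1).natDegree = 2 := by
    rw [show (1 : Polynomial ℝ) = C 1 from (map_one C).symm, natDegree_X_pow_sub_C]
  rw [legU, natDegree_pow, h2, mul_comm]

lemma legQ_natDegree_le (n : ℕ) : (legQ n).natDegree ≤ n :=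
  (natDegree_iterate_derivative _ _).trans (by rw [legU_natDegree]; omega)

lemma legP_natDegree_le (n : ℕ) : (legP n).natDegree ≤ n :=
  (natDegree_C_mul_le _ _).trans (legQ_natDegree_le n)

lemma legfac_ne (n : ℕ) : ((2 : ℝ) ^ n * n.factorial)⁻¹ ≠ 0 := by positivity

lemma legQ_coeff (n : ℕ) : (legQ n).coeff n = ((2 * n).descFactorial n : ℝ) := by
  rw [legQ, coeff_iterate_derivative]
  have h1 : (legU n).coeff (n + n) = 1 := by
    have := (legU_monic n).coeff_natDegree
    rwa [legU_natDegree, show 2 * n = n + n by ring] at this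
  rw [h1, show n + n = 2 * n by ring]
  simp

lemma legP_coeff_ne (n : ℕ) : (legP n).coeff n ≠ 0 := by
  rw [legP, coeff_C_mul, legQ_coeff]
  have h2 : (2 * n).descFactorial n ≠ 0 := by
    rw [Ne, Nat.descFactorial_eq_zero_iff_lt]
    omega
  have h3 : (0:ℝ) < ((2 * n).descFactorial n : ℝ) := by
    have := Nat.pos_of_ne_zero h2
    exact_mod_cast this
  positivity

lemma orth_lt (m n : ℕ) (h : m < n) :
    (∫ x in (-1 : ℝ)..1, (legP m).eval x * (legP n).eval x) = 0 := by
  have e : (fun x : ℝ => (legP m).eval x * (legP n).eval x)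
      = fun x => ((2 : ℝ) ^ n * n.factorial)⁻¹
          * ((legP m).eval x * (derivative^[n] (legU n)).eval x) := by
    funext x
    simp only [legP, legQ, eval_mul, eval_C]
    ring
  rw [e, intervalIntegral.integral_const_mul, ibp_iter n n le_rfl (legP m),
    iterate_derivative_eq_zero (lt_of_le_of_lt (legP_natDegree_le m) h)]
  simp

lemma legdiag (n : ℕ) :
    (∫ x in (-1 : ℝ)..1, (legP n).eval x * (legP n).eval x) = 2 / (2 * n + 1) := by
  have e : (fun x : ℝ => (legP n).eval x * (legP n).eval x)
      = fun x => (((2 : ℝ) ^ n * n.factorial)⁻¹ * ((2 : ℝ) ^ n * n.factorial)⁻¹)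
          * ((legQ n).eval x * (derivative^[n] (legU n)).eval x) := by
    funext x
    rw [legP, eval_mul, eval_C]
    rw [show (derivative^[n] (legU n)) = legQ n from rfl]
    ring
  rw [e, intervalIntegral.integral_const_mul, ibp_iter n n le_rfl (legQ n)]
  have hconst : derivative^[n] (legQ n) = C (((2 * n).factorial : ℝ)) := by
    rw [legQ, ← Function.iterate_add_apply]
    have h0 : (derivative^[n + n] (legU n)).natDegree ≤ 0 :=
      (natDegree_iterate_derivative _ _).trans (by rw [legU_natDegree]; omega)
    rw [Polynomial.eq_C_of_natDegree_le_zero h0, coeff_iterate_derivative]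
    simp only [zero_add]
    have h1 : (legU n).coeff (n + n) = 1 := by
      have := (legU_monic n).coeff_natDegree
      rwa [legU_natDegree, show 2 * n = n + n by ring] at this
    rw [h1, Nat.descFactorial_self, two_mul]
    simp
  have e2 : (fun x : ℝ => (derivative^[n] (legQ n)).eval x * (legU n).eval x)
      = fun x : ℝ => ((2 * n).factorial : ℝ) * ((-1 : ℝ) ^ n * (1 - x ^ 2) ^ n) := by
    funext x
    rw [hconst, legU]
    simp only [eval_C, eval_pow, eval_sub, eval_one, eval_X]
    rw [show (x ^ 2 - 1 : ℝ) = (-1) * (1 - x ^ 2) by ring, mul_pow]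
  rw [e2, intervalIntegral.integral_const_mul, intervalIntegral.integral_const_mul, In_val]
  have hne2 : (2 * (n : ℝ) + 1) ≠ 0 := by positivity
  have hfac : ((2 * n + 1).factorial : ℝ) = (2 * (n : ℝ) + 1) * ((2 * n).factorial : ℝ) := by
    rw [Nat.factorial_succ]; push_cast; ring
  have hfn : ((n.factorial : ℝ)) ≠ 0 := by positivity
  have h2n : ((2 * n).factorial : ℝ) ≠ 0 := by positivity
  have h2p : ((2 : ℝ) ^ n) ≠ 0 := by positivity
  have hm1 : ((-1 : ℝ)) ^ (n * 2) = 1 := Even.neg_one_pow ⟨n, by ring⟩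
  rw [hfac]
  field_simp
  ring_nf
  rw [hm1]
  ring

lemma legP_zero : legP 0 = 1 := by
  simp [legP, legQ, legU]

lemma leg_expand : ∀ (M : ℕ) (p : Polynomial ℝ), p.natDegree ≤ M →
    ∃ a : ℕ → ℝ, p = ∑ m ∈ Finset.range (M + 1), C (a m) * legP m := by
  intro M
  induction M with
  | zero =>
    intro p hp
    exact ⟨fun _ => p.coeff 0, by simp [legP_zero, (eq_C_of_natDegree_le_zero hp).symm]⟩
  | succ M ih =>
    intro p hp
    set b : ℝ := p.coeff (M + 1) / (legP (M + 1)).coeff (M + 1) with hb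
    set q : Polynomial ℝ := p - C b * legP (M + 1) with hq
    have hq1 : q.natDegree ≤ M + 1 :=
      (natDegree_sub_le _ _).trans (by
        simp only [sup_le_iff]
        exact ⟨hp, (natDegree_C_mul_le _ _).trans (legP_natDegree_le _)⟩)
    have hq2 : q.coeff (M + 1) = 0 := by
      rw [hq, coeff_sub, coeff_C_mul, hb, div_mul_cancel₀ _ (legP_coeff_ne (M + 1)), sub_self]
    have hq3 : q.natDegree ≤ M := by
      rcases eq_or_ne q 0 with h0 | h0
      · simp [h0]
      · rcases eq_or_ne q.natDegree (M + 1) with h1 | h1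
        · have hl : q.coeff q.natDegree ≠ 0 := fun hc =>
            h0 (Polynomial.leadingCoeff_eq_zero.mp hc)
          rw [h1] at hl
          exact absurd hq2 hl
        · omega
    obtain ⟨a, ha⟩ := ih q hq3
    refine ⟨fun m => if m = M + 1 then b else a m, ?_⟩
    have hlast : C (if M + 1 = M + 1 then b else a (M + 1)) * legP (M + 1)
        = C b * legP (M + 1) := by rw [if_pos rfl]
    rw [Finset.sum_range_succ, hlast]
    have : ∑ m ∈ Finset.range (M + 1), C (if m = M + 1 then b else a m) * legP m
        = ∑ m ∈ Finset.range (M + 1), C (a m) * legP m := by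
      apply Finset.sum_congr rfl
      intro m hm
      rw [if_neg (by simp at hm; omega)]
    rw [this, ← ha, hq]
    ring

lemma orth_ne (m n : ℕ) (h : m ≠ n) :
    (∫ x in (-1 : ℝ)..1, (legP m).eval x * (legP n).eval x) = 0 := by
  rcases lt_or_gt_of_ne h with h1 | h1
  · exact orth_lt m n h1
  · rw [show (fun x : ℝ => (legP m).eval x * (legP n).eval x)
      = fun x => (legP n).eval x * (legP m).eval x from funext fun x => mul_comm _ _]
    exact orth_lt n m h1

lemma legP_ODE_eval (n : ℕ) (x : ℝ) :
    (x ^ 2 - 1) * (derivative (derivative (legP n))).eval x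
      + 2 * x * (derivative (legP n)).eval x
      = (n : ℝ) * ((n : ℝ) + 1) * (legP n).eval x := by
  have hODE := congrArg (fun p => Polynomial.eval x p) (legODE n)
  simp only [eval_add, eval_mul, eval_sub, eval_pow, eval_X, eval_one, eval_ofNat,
    eval_natCast] at hODE
  simp only [legP, derivative_C_mul, eval_mul, eval_C]
  linear_combination ((2 : ℝ) ^ n * n.factorial)⁻¹ * hODE

lemma leg_eval (n : ℕ) (x : ℝ) : legendre n x = (legP n).eval x := by
  have h : (fun y : ℝ => (y ^ 2 - 1) ^ n) = fun y => (legU n).eval y := by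
    funext y; simp [legU]
  rw [legendre, h, itDeriv_poly, legP, legQ, eval_mul, eval_C]

/-- The Legendre series `F(t,x) = Σ c_n exp(-k n(n+1)(T-t)/2) P_n(x)` with
`c_n = ((2n+1)/2)∫ h̃ P_n` solves the pricing PDE with terminal condition `F(T,·) = h̃`. -/
theorem legendre_series_solves_pricing_pde (k T : ℝ) (hk : 0 < k)
    (N : ℕ) (h : Polynomial ℝ) (hdeg : h.natDegree ≤ N) :
    let c : ℕ → ℝ := fun n =>
      ((2 * n + 1 : ℝ) / 2) * ∫ y in (-1 : ℝ)..1, h.eval y * legendre n y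
    let F : ℝ → ℝ → ℝ := fun t x =>
      ∑ n ∈ Finset.range (N + 1),
        c n * Real.exp (-(1 / 2) * k * n * (n + 1) * (T - t)) * legendre n x
    (∀ t ∈ Icc (0 : ℝ) T, ∀ x ∈ Ioo (-1 : ℝ) 1,
      deriv (fun s => F s x) t
        = k * x * deriv (fun y => F t y) x
          - k / 2 * (1 - x ^ 2) * deriv (deriv (fun y => F t y)) x) ∧
    (∀ x : ℝ, F T x = h.eval x) := by
  intro c F
  have hFdef : F = fun t x =>
      ∑ n ∈ Finset.range (N + 1),
        c n * Real.exp (-(1 / 2) * k * n * (n + 1) * (T - t)) * legendre n x := rfl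
  obtain ⟨a, ha⟩ := leg_expand N h hdeg
  -- the coefficients agree with the expansion coefficients
  have hc : ∀ n, n ∈ Finset.range (N + 1) → c n = a n := by
    intro n hn
    have hcd : c n = ((2 * n + 1 : ℝ) / 2)
        * ∫ y in (-1 : ℝ)..1, h.eval y * legendre n y := rfl
    have e1 : (fun y : ℝ => h.eval y * legendre n y)
        = fun y => ∑ m ∈ Finset.range (N + 1),
            a m * ((legP m).eval y * (legP n).eval y) := by
      funext y
      rw [leg_eval, ha]
      rw [eval_finset_sum, Finset.sum_mul]
      refine Finset.sum_congr rfl fun m _ => ?_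
      rw [eval_mul, eval_C]
      ring
    have e2 : (∫ y in (-1 : ℝ)..1, h.eval y * legendre n y)
        = ∑ m ∈ Finset.range (N + 1),
            a m * ∫ y in (-1 : ℝ)..1, (legP m).eval y * (legP n).eval y := by
      rw [e1, intervalIntegral.integral_finset_sum]
      · exact Finset.sum_congr rfl fun m _ => intervalIntegral.integral_const_mul _ _
      · intro m _
        exact (continuous_const.mul ((legP m).continuous.mul (legP n).continuous)).intervalIntegrable _ _
    have e3 : (∑ m ∈ Finset.range (N + 1),
          a m * ∫ y in (-1 : ℝ)..1, (legP m).eval y * (legP n).eval y)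
        = a n * (2 / (2 * (n : ℝ) + 1)) := by
      rw [Finset.sum_eq_single n]
      · rw [legdiag]
      · intro m _ hmn
        rw [orth_ne m n hmn, mul_zero]
      · intro hnn
        exact absurd hn hnn
    rw [hcd, e2, e3]
    have h1 : (2 * (n : ℝ) + 1) ≠ 0 := by positivity
    field_simp
  constructor
  · -- the PDE
    intro t _ x _
    have hPt : (fun y => F t y) = fun y =>
        (∑ n ∈ Finset.range (N + 1),
          C (c n * Real.exp (-(1 / 2) * k * n * (n + 1) * (T - t))) * legP n).eval y := by
      funext y
      rw [hFdef, eval_finset_sum]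
      refine Finset.sum_congr rfl fun n _ => ?_
      rw [eval_mul, eval_C, leg_eval]
    set Pt : Polynomial ℝ := ∑ n ∈ Finset.range (N + 1),
      C (c n * Real.exp (-(1 / 2) * k * n * (n + 1) * (T - t))) * legP n with hPtdef
    have hd1 : deriv (fun y => F t y) x = (derivative Pt).eval x := by
      rw [hPt]; exact Polynomial.deriv (p := Pt)
    have hd2 : deriv (deriv (fun y => F t y)) x
        = (derivative (derivative Pt)).eval x := by
      rw [hPt]
      have : deriv (fun y => Pt.eval y) = fun y => (derivative Pt).eval y :=
        funext fun y => Polynomial.deriv (p := Pt)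
      rw [this]
      exact Polynomial.deriv (p := derivative Pt)
    have hD : HasDerivAt (fun s => F s x)
        (∑ n ∈ Finset.range (N + 1),
          (c n * (Real.exp (-(1 / 2) * k * n * (n + 1) * (T - t))
            * (-(1 / 2) * k * n * (n + 1) * -1))) * legendre n x) t := by
      rw [hFdef]
      apply HasDerivAt.fun_sum
      intro n _
      have h1 : HasDerivAt (fun s : ℝ => T - s) (-1) t := (hasDerivAt_id t).const_sub T
      have h2 := h1.const_mul (-(1 / 2) * k * n * (n + 1))
      have h3 := h2.exp
      exact (h3.const_mul (c n)).mul_const (legendre n x)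
    rw [hD.deriv, hd1, hd2]
    have hP1 : (derivative Pt).eval x = ∑ n ∈ Finset.range (N + 1),
        (c n * Real.exp (-(1 / 2) * k * n * (n + 1) * (T - t)))
          * (derivative (legP n)).eval x := by
      rw [hPtdef, derivative_sum, eval_finset_sum]
      exact Finset.sum_congr rfl fun n _ => by rw [derivative_C_mul, eval_mul, eval_C]
    have hP2 : (derivative (derivative Pt)).eval x = ∑ n ∈ Finset.range (N + 1),
        (c n * Real.exp (-(1 / 2) * k * n * (n + 1) * (T - t)))
          * (derivative (derivative (legP n))).eval x := by
      rw [hPtdef, derivative_sum, derivative_sum, eval_finset_sum]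
      refine Finset.sum_congr rfl fun n _ => ?_
      rw [derivative_C_mul, derivative_C_mul, eval_mul, eval_C]
    rw [hP1, hP2, Finset.mul_sum, Finset.mul_sum, ← Finset.sum_sub_distrib]
    refine Finset.sum_congr rfl fun n _ => ?_
    rw [leg_eval]
    linear_combination (-(k / 2) * (c n * Real.exp (-(1 / 2) * k * n * (n + 1) * (T - t))))
      * legP_ODE_eval n x
  · -- terminal condition
    intro x
    show (∑ n ∈ Finset.range (N + 1),
        c n * Real.exp (-(1 / 2) * k * n * (n + 1) * (T - T)) * legendre n x) = h.eval x
    have : ∀ n ∈ Finset.range (N + 1),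
        c n * Real.exp (-(1 / 2) * k * n * (n + 1) * (T - T)) * legendre n x
          = a n * (legP n).eval x := by
      intro n hn
      rw [hc n hn, leg_eval, sub_self, mul_zero, Real.exp_zero, mul_one]
    rw [Finset.sum_congr rfl this]
    conv_rhs => rw [ha]
    rw [eval_finset_sum]
    exact Finset.sum_congr rfl fun m _ => by rw [eval_mul, eval_C]
end
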